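/- arXiv:1911.07431 — 3 statements merged into one kernel-verified Lean document; each statement's English description precedes it below -/
import Mathlib

section
/- Let $k \ge 3$ and $l \in [k-1]$ be integers, and let $n, m$ be positive integers with $m \le n/(2k^4)$. If $H$ is a $k$-uniform hypergraph on $n$ vertices such that every $l$-subset of vertices is contained in more than $\binom{n-l}{k-l} - \binom{n-l-m}{k-l}$ edges, then $H$ has a matching of size at least $m+1$. -/
open Finset

/-- A set of edges is a matching if its members are pairwise disjoint. -/
def IsMatchingF {α : Type*} (M : Finset (Finset α)) : Prop :=
  ∀ e ∈ M, ∀ f ∈ M, e ≠ f → Disjoint e f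

/-- The degree of a vertex set `T`: the number of edges containing `T`. -/
def degF {α : Type*} [DecidableEq α] (E : Finset (Finset α)) (T : Finset α) : ℕ :=
  (E.filter (fun e => T ⊆ e)).card

/-!
Induction on `m`, deleting one vertex. Suppose the degree condition holds for `m + 1` but there is
no matching of size `m + 2`. A maximal matching then spans at most `k (m + 1)` vertices and meets
every edge, so double counting the `l`-sets gives a vertex `w` of degree larger than
`k (m + 1) · C(n - 2, k - 2)`. Removing `w` costs each `l`-set at most `C(n - l - 1, k - l - 1)`
edges, which is exactly how much the threshold drops from `(n, m + 1)` to `(n - 1, m)`, so by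
induction `H - w` has a matching of size `m + 1`. Its `k (m + 1)` vertices each lie in at most
`C(n - 2, k - 2)` edges through `w`, so some edge through `w` misses them all and extends it.
-/

namespace Nat

theorem choose_succ_eq_choose_sub_add_sum {a d : ℕ} (j : ℕ) (hd : d ≤ a) :
    a.choose (j + 1) = (a - d).choose (j + 1) + ∑ i ∈ range d, (a - 1 - i).choose j := by
  induction d with
  | zero => simp
  | succ d ih =>
    rw [ih (by omega), show a - d = a - (d + 1) + 1 by omega, choose_succ_succ', sum_range_succ,
      show a - 1 - d = a - (d + 1) by omega]
    ring

theorem mul_choose_sub_le_choose_sub_choose {a d : ℕ} (j : ℕ) (hd : d ≤ a) :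
    d * (a - d).choose j ≤ a.choose (j + 1) - (a - d).choose (j + 1) := by
  rw [choose_succ_eq_choose_sub_add_sum j hd, Nat.add_sub_cancel_left]
  calc d * (a - d).choose j = ∑ _i ∈ range d, (a - d).choose j := by simp
    _ ≤ _ := sum_le_sum fun i hi => choose_le_choose j (by simp only [mem_range] at hi; omega)

theorem choose_le_choose_sub_add_mul {a d : ℕ} (j : ℕ) (hd : d ≤ a) :
    a.choose (j + 1) ≤ (a - d).choose (j + 1) + d * (a - 1).choose j := by
  rw [choose_succ_eq_choose_sub_add_sum j hd]
  gcongr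
  calc ∑ i ∈ range d, (a - 1 - i).choose j ≤ ∑ _i ∈ range d, (a - 1).choose j :=
      sum_le_sum fun i _ => choose_le_choose j (Nat.sub_le _ _)
    _ = _ := by simp

theorem choose_le_two_mul_choose_sub {a d j : ℕ} (h : 2 * (d * j) ≤ a) :
    a.choose j ≤ 2 * (a - d).choose j := by
  rcases j with _ | j
  · simp
  obtain rfl | ha := Nat.eq_zero_or_pos a
  · simp
  have hd : d ≤ a := by nlinarith
  have hpascal : a * (a - 1).choose j = a.choose (j + 1) * (j + 1) := by
    simpa only [Nat.sub_add_cancel ha] using add_one_mul_choose_eq (a - 1) j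
  have hdiff := choose_le_choose_sub_add_mul j hd
  refine Nat.le_of_mul_le_mul_left ?_ ha
  nlinarith

theorem pow_three_mul_choose_le_choose {k s N : ℕ} (hk : 2 ≤ k) (hs : 1 ≤ s)
    (hN : 2 * k ^ 4 * s ≤ N) : k ^ 3 * s * (N - 2).choose (k - 2) ≤ (N - s).choose (k - 1) := by
  obtain ⟨j, rfl⟩ : ∃ j, k = j + 2 := ⟨k - 2, by omega⟩
  obtain ⟨t, rfl⟩ : ∃ t, s = t + 1 := ⟨s - 1, by omega⟩
  have hP : 8 ≤ (j + 2) ^ 3 := by nlinarith [Nat.pow_le_pow_left hk 3]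
  have hcoef : 2 * ((j + 2) ^ 3 * (t + 1) * (j + 1)) + t + 1 ≤ N - 2 := by
    have : 2 * (j + 2) ^ 4 * (t + 1) =
        2 * ((j + 2) ^ 3 * (t + 1) * (j + 1)) + 2 * (j + 2) ^ 3 * (t + 1) := by ring
    have : 2 * 8 * (t + 1) ≤ 2 * (j + 2) ^ 3 * (t + 1) := by gcongr
    omega
  obtain ⟨M, rfl⟩ : ∃ M, N = M + t + 2 := ⟨N - t - 2, by omega⟩
  simp only [show M + t + 2 - 2 = M + t by omega, show M + t + 2 - (t + 1) = M + 1 by omega,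
    Nat.add_sub_cancel] at hcoef ⊢
  have hhalve : (M + t).choose j ≤ 2 * M.choose j := by
    simpa using choose_le_two_mul_choose_sub (a := M + t) (d := t) (j := j) (by nlinarith)
  have hpascal : (M + 1) * M.choose j = (M + 1).choose (j + 1) * (j + 1) :=
    add_one_mul_choose_eq M j
  refine Nat.le_of_mul_le_mul_right ?_ (Nat.succ_pos j)
  calc (j + 2) ^ 3 * (t + 1) * (M + t).choose j * (j + 1)
      ≤ (j + 2) ^ 3 * (t + 1) * (j + 1) * (2 * M.choose j) := by rw [mul_right_comm]; gcongr
    _ = 2 * ((j + 2) ^ 3 * (t + 1) * (j + 1)) * M.choose j := by ring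
    _ ≤ (M + 1) * M.choose j := by gcongr; omega
    _ = _ := hpascal

theorem choose_le_mul_choose_pred {k l : ℕ} (hlk : l < k) :
    k.choose l ≤ k * (k - 1).choose l := by
  have h := choose_mul_succ_eq (k - 1) l
  rw [Nat.sub_add_cancel (by omega : 1 ≤ k)] at h
  calc k.choose l ≤ k.choose l * (k - l) := Nat.le_mul_of_pos_right _ (by omega)
    _ = k * (k - 1).choose l := by rw [← h, mul_comm]

theorem choose_mul_sq_mul_choose_le {k l s N : ℕ} (hk : 2 ≤ k) (hlk : l < k) (hs : 1 ≤ s)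
    (hN : 2 * k ^ 4 * s ≤ N) :
    k.choose l * (k * s) ^ 2 * (N - 2).choose (k - 2) ≤
      N.choose l * ((N - l).choose (k - l) - (N - l - s).choose (k - l)) := by
  have hkN : k + s ≤ N := by
    have : k * s ≤ k ^ 4 * s := by gcongr; exact Nat.le_self_pow (by norm_num) k
    nlinarith
  have hdiff : s * (N - l - s).choose (k - l - 1) ≤
      (N - l).choose (k - l) - (N - l - s).choose (k - l) := by
    have := mul_choose_sub_le_choose_sub_choose (a := N - l) (d := s) (k - l - 1) (by omega)
    rwa [show k - l - 1 + 1 = k - l by omega] at this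
  have hsplit : (N - s).choose (k - 1) * (k - 1).choose l =
      (N - s).choose l * (N - l - s).choose (k - l - 1) := by
    rw [choose_mul (by omega), show N - s - l = N - l - s by omega,
      show k - 1 - l = k - l - 1 by omega]
  calc k.choose l * (k * s) ^ 2 * (N - 2).choose (k - 2)
      ≤ k * (k - 1).choose l * (k * s) ^ 2 * (N - 2).choose (k - 2) := by
        gcongr; exact choose_le_mul_choose_pred hlk
    _ = s * (k - 1).choose l * (k ^ 3 * s * (N - 2).choose (k - 2)) := by ring
    _ ≤ s * (k - 1).choose l * (N - s).choose (k - 1) := by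
        gcongr; exact pow_three_mul_choose_le_choose hk hs hN
    _ = s * ((N - s).choose l * (N - l - s).choose (k - l - 1)) := by rw [← hsplit]; ring
    _ ≤ s * (N.choose l * (N - l - s).choose (k - l - 1)) := by gcongr; omega
    _ = N.choose l * (s * (N - l - s).choose (k - l - 1)) := by ring
    _ ≤ _ := by gcongr

end Nat

section Hypergraph

variable {α : Type*}

theorem IsMatchingF.mono {M M' : Finset (Finset α)} (h : M' ⊆ M) (hM : IsMatchingF M) :
    IsMatchingF M' :=
  fun e he f hf hef => hM e (h he) f (h hf) hef

variable [DecidableEq α]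

theorem IsMatchingF.insert {M : Finset (Finset α)} {e : Finset α} (hM : IsMatchingF M)
    (he : Disjoint e (M.biUnion id)) : IsMatchingF (insert e M) := by
  rw [disjoint_biUnion_right] at he
  intro f hf g hg hfg
  rw [mem_insert] at hf hg
  rcases hf with rfl | hf <;> rcases hg with rfl | hg
  · exact absurd rfl hfg
  · exact he g hg
  · exact (he f hf).symm
  · exact hM f hf g hg hfg

theorem exists_isMatchingF_forall_not_disjoint (E : Finset (Finset α)) :
    ∃ M ⊆ E, IsMatchingF M ∧ ∀ e ∈ E, e.Nonempty → ¬Disjoint e (M.biUnion id) := by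
  classical
  obtain ⟨M, hM, hmax⟩ :=
    exists_max_image (E.powerset.filter IsMatchingF) card ⟨∅, by simp [IsMatchingF]⟩
  rw [mem_filter, mem_powerset] at hM
  refine ⟨M, hM.1, hM.2, fun e he hne hdisj => ?_⟩
  have heM : e ∉ M := fun heM =>
    hne.ne_empty (disjoint_self.mp (hdisj.mono_right (subset_biUnion_of_mem id heM)))
  have := hmax (insert e M) (mem_filter.mpr ⟨mem_powerset.mpr (insert_subset he hM.1),
    hM.2.insert hdisj⟩)
  rw [card_insert_of_notMem heM] at this
  omega

theorem degF_filter_subset (E : Finset (Finset α)) (S T : Finset α) :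
    degF (E.filter (S ⊆ ·)) T = degF E (S ∪ T) := by
  simp only [degF, filter_filter, union_subset_iff]

theorem degF_eq_degF_insert_add_degF_filter_notMem (E : Finset (Finset α)) (T : Finset α)
    (w : α) : degF E T = degF E (insert w T) + degF (E.filter (w ∉ ·)) T := by
  simp only [degF, filter_filter, insert_subset_iff]
  rw [← card_filter_add_card_filter_not (s := E.filter (T ⊆ ·)) (w ∈ ·), filter_filter,
    filter_filter]
  congr 2 <;> ext e <;> simp [and_comm]

theorem degF_le_choose {V : Finset α} {E : Finset (Finset α)} {k : ℕ} (hEV : ∀ e ∈ E, e ⊆ V)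
    (hEk : ∀ e ∈ E, #e = k) {S : Finset α} (hSV : S ⊆ V) :
    degF E S ≤ (#V - #S).choose (k - #S) := by
  rw [← card_sdiff_of_subset hSV, ← card_powersetCard]
  refine card_le_card_of_injOn (· \ S) (fun e he => ?_) (fun e₁ he₁ e₂ he₂ heq => ?_)
  · rw [mem_coe, mem_filter] at he
    rw [mem_coe, mem_powersetCard, card_sdiff_of_subset he.2, hEk e he.1]
    exact ⟨sdiff_subset_sdiff (hEV e he.1) le_rfl, rfl⟩
  · rw [mem_coe, mem_filter] at he₁ he₂
    rw [← sdiff_union_of_subset he₁.2, ← sdiff_union_of_subset he₂.2]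
    exact congrArg (· ∪ S) heq

theorem sum_degF_powersetCard {V : Finset α} {E : Finset (Finset α)} {k : ℕ}
    (hEV : ∀ e ∈ E, e ⊆ V) (hEk : ∀ e ∈ E, #e = k) (l : ℕ) :
    ∑ T ∈ V.powersetCard l, degF E T = #E * k.choose l := by
  simp only [degF, card_filter]
  rw [sum_comm, ← smul_eq_mul, ← sum_const]
  refine sum_congr rfl fun e he => ?_
  rw [← card_filter, ← hEk e he, ← card_powersetCard]
  congr 1
  ext T
  simp only [mem_filter, mem_powersetCard]
  exact ⟨fun h => ⟨h.2, h.1.2⟩, fun h => ⟨⟨h.1.trans (hEV e he), h.2⟩, h.1⟩⟩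

theorem card_le_sum_degF_singleton {E : Finset (Finset α)} {U : Finset α}
    (h : ∀ e ∈ E, ¬Disjoint e U) : #E ≤ ∑ u ∈ U, degF E {u} := by
  calc #E ≤ #(U.biUnion fun u => E.filter ({u} ⊆ ·)) := card_le_card fun e he => by
        obtain ⟨u, hue, huU⟩ := not_disjoint_iff.mp (h e he)
        exact mem_biUnion.mpr ⟨u, huU, mem_filter.mpr ⟨he, singleton_subset_iff.mpr hue⟩⟩
    _ ≤ _ := card_biUnion_le

theorem exists_card_le_card_mul_degF {E : Finset (Finset α)} {U : Finset α} (hE : E.Nonempty)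
    (h : ∀ e ∈ E, ¬Disjoint e U) : ∃ u ∈ U, #E ≤ #U * degF E {u} := by
  obtain ⟨e, he⟩ := hE
  obtain ⟨u, -, hu⟩ := not_disjoint_iff.mp (h e he)
  refine exists_le_of_sum_le ⟨u, hu⟩ ?_
  rw [sum_const, smul_eq_mul, ← mul_sum]
  exact Nat.mul_le_mul_left _ (card_le_sum_degF_singleton h)

theorem exists_mem_disjoint_of_card_mul_lt_degF {E : Finset (Finset α)} {U : Finset α} {w : α}
    {X : ℕ} (hX : ∀ u ∈ U, degF E {w, u} ≤ X) (h : #U * X < degF E {w}) :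
    ∃ e ∈ E, w ∈ e ∧ Disjoint e U := by
  by_contra! hmeet
  have hcover := card_le_sum_degF_singleton (E := E.filter ({w} ⊆ ·)) (U := U) fun e he => by
    rw [mem_filter, singleton_subset_iff] at he
    exact hmeet e he.1 he.2
  simp only [degF_filter_subset, singleton_union] at hcover
  have := hcover.trans (sum_le_card_nsmul U _ X hX)
  rw [smul_eq_mul] at this
  exact absurd this (not_le.mpr h)

variable {k l : ℕ} {V : Finset α} {E : Finset (Finset α)}

theorem exists_lt_degF_singleton_of_not_exists_isMatchingF (hk : 2 ≤ k) (hlk : l < k)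
    (hEV : ∀ e ∈ E, e ⊆ V) (hEk : ∀ e ∈ E, #e = k) {s : ℕ} (hs : 1 ≤ s)
    (hsV : 2 * k ^ 4 * s ≤ #V) (hlV : l ≤ #V)
    (hdeg : ∀ T ⊆ V, #T = l → (#V - l).choose (k - l) - (#V - l - s).choose (k - l) < degF E T)
    (hno : ¬∃ M ⊆ E, IsMatchingF M ∧ #M = s + 1) :
    ∃ w ∈ V, k * s * (#V - 2).choose (k - 2) < degF E {w} := by
  set thr := (#V - l).choose (k - l) - (#V - l - s).choose (k - l)
  obtain ⟨M, hME, hM, hcover⟩ := exists_isMatchingF_forall_not_disjoint E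
  have hMs : #M ≤ s := by
    by_contra! hbig
    obtain ⟨M', hM'M, hM'⟩ := exists_subset_card_eq (Nat.succ_le_of_lt hbig)
    exact hno ⟨M', hM'M.trans hME, hM.mono hM'M, hM'⟩
  have hWk : #(M.biUnion id) ≤ k * s := calc
    #(M.biUnion id) ≤ #M * k := card_biUnion_le_card_mul M id k fun e he => (hEk e (hME he)).le
    _ ≤ k * s := by rw [mul_comm]; gcongr
  have hsum : (#V).choose l * thr < #E * k.choose l := by
    rw [← sum_degF_powersetCard hEV hEk, ← card_powersetCard, ← smul_eq_mul, ← sum_const]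
    obtain ⟨T, hTV, hT⟩ := exists_subset_card_eq hlV
    exact sum_lt_sum (fun T hT => (hdeg T (mem_powersetCard.1 hT).1 (mem_powersetCard.1 hT).2).le)
      ⟨T, mem_powersetCard.2 ⟨hTV, hT⟩, hdeg T hTV hT⟩
  have hE : E.Nonempty := nonempty_iff_ne_empty.2 fun h => by simp [h] at hsum
  obtain ⟨w, hwW, hw⟩ := exists_card_le_card_mul_degF hE fun e he =>
    hcover e he (card_pos.1 (by rw [hEk e he]; omega))
  refine ⟨w, biUnion_subset.2 (fun e he => hEV e (hME he)) hwW, ?_⟩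
  refine Nat.lt_of_mul_lt_mul_left (a := k.choose l * (k * s)) ?_
  calc k.choose l * (k * s) * (k * s * (#V - 2).choose (k - 2))
      = k.choose l * (k * s) ^ 2 * (#V - 2).choose (k - 2) := by ring
    _ ≤ (#V).choose l * thr := Nat.choose_mul_sq_mul_choose_le hk hlk hs hsV
    _ < #E * k.choose l := hsum
    _ ≤ k * s * degF E {w} * k.choose l := by gcongr; exact hw.trans (by gcongr)
    _ = _ := by ring

theorem lt_degF_filter_notMem_of_lt_degF (hlk : l < k) (hEV : ∀ e ∈ E, e ⊆ V) (hEk : ∀ e ∈ E, #e = k)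
    {w : α} (hw : w ∈ V) (hlV : l < #V) {s : ℕ}
    (hdeg : ∀ T ⊆ V, #T = l →
      (#V - l).choose (k - l) - (#V - l - (s + 1)).choose (k - l) < degF E T) :
    ∀ T ⊆ V.erase w, #T = l →
      (#(V.erase w) - l).choose (k - l) - (#(V.erase w) - l - s).choose (k - l) <
        degF (E.filter (w ∉ ·)) T := by
  intro T hT hTl
  have hTV : T ⊆ V := hT.trans (erase_subset w V)
  have hwT : w ∉ T := fun h => (mem_erase.1 (hT h)).1 rfl
  have hins := degF_le_choose hEV hEk (insert_subset hw hTV)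
  rw [card_insert_of_notMem hwT, hTl] at hins
  have hpascal : (#V - l).choose (k - l) =
      (#V - (l + 1)).choose (k - (l + 1)) + (#V - (l + 1)).choose (k - l) := by
    rw [show #V - l = #V - (l + 1) + 1 by omega, show k - l = k - (l + 1) + 1 by omega,
      Nat.choose_succ_succ']
  have hmono : (#V - l - (s + 1)).choose (k - l) ≤ (#V - (l + 1)).choose (k - l) :=
    Nat.choose_le_choose _ (by omega)
  have := hdeg T hTV hTl
  rw [degF_eq_degF_insert_add_degF_filter_notMem E T w] at this
  rw [card_erase_of_mem hw, show #V - 1 - l = #V - (l + 1) by omega,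
    show #V - (l + 1) - s = #V - l - (s + 1) by omega]
  omega

theorem exists_isMatchingF_card_succ_of_lt_degF (hEV : ∀ e ∈ E, e ⊆ V) (hEk : ∀ e ∈ E, #e = k)
    {w : α} (hw : w ∈ V) {s : ℕ} (hdeg : k * s * (#V - 2).choose (k - 2) < degF E {w})
    {M : Finset (Finset α)} (hME : M ⊆ E.filter (w ∉ ·)) (hM : IsMatchingF M) (hMs : #M = s) :
    ∃ M ⊆ E, IsMatchingF M ∧ #M = s + 1 := by
  have hME' : M ⊆ E := hME.trans (filter_subset _ E)
  set U := M.biUnion id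
  have hU : #U ≤ k * s := calc
    #U ≤ #M * k := card_biUnion_le_card_mul M id k fun e he => (hEk e (hME' he)).le
    _ = k * s := by rw [hMs, mul_comm]
  have hX : ∀ u ∈ U, degF E {w, u} ≤ (#V - 2).choose (k - 2) := fun u hu => by
    obtain ⟨e, he, hue⟩ := mem_biUnion.1 hu
    have huw : u ≠ w := fun h => (mem_filter.1 (hME he)).2 (h ▸ hue)
    have hpair : #({w, u} : Finset α) = 2 := card_pair huw.symm
    simpa [hpair] using degF_le_choose hEV hEk (insert_subset hw
      (singleton_subset_iff.2 (hEV e (hME' he) hue)))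
  obtain ⟨e, he, hwe, hdisj⟩ :=
    exists_mem_disjoint_of_card_mul_lt_degF hX (lt_of_le_of_lt (by gcongr) hdeg)
  have heM : e ∉ M := fun h => (mem_filter.1 (hME h)).2 hwe
  exact ⟨insert e M, insert_subset he hME', hM.insert hdisj,
    by rw [card_insert_of_notMem heM, hMs]⟩

theorem exists_isMatchingF_of_lt_degF (hk : 2 ≤ k) (hlk : l < k) (m : ℕ)
    (hEV : ∀ e ∈ E, e ⊆ V) (hEk : ∀ e ∈ E, #e = k) (hmV : 2 * k ^ 4 * m ≤ #V) (hlV : l ≤ #V)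
    (hdeg : ∀ T ⊆ V, #T = l → (#V - l).choose (k - l) - (#V - l - m).choose (k - l) < degF E T) :
    ∃ M ⊆ E, IsMatchingF M ∧ #M = m + 1 := by
  induction m generalizing V E with
  | zero =>
    obtain ⟨T, hTV, hT⟩ := exists_subset_card_eq hlV
    have hpos := hdeg T hTV hT
    rw [Nat.sub_zero, Nat.sub_self] at hpos
    obtain ⟨e, he⟩ := card_pos.1 hpos
    exact ⟨{e}, singleton_subset_iff.2 (mem_filter.1 he).1,
      fun f hf g hg hfg => absurd ((mem_singleton.1 hf).trans (mem_singleton.1 hg).symm) hfg,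
      card_singleton e⟩
  | succ m ih =>
    refine by_contra fun hfound => ?_
    have hkV : k + m + 1 ≤ #V := by
      have : k * (m + 1) ≤ k ^ 4 * (m + 1) := by gcongr; exact Nat.le_self_pow (by norm_num) k
      nlinarith
    obtain ⟨w, hw, hwdeg⟩ := exists_lt_degF_singleton_of_not_exists_isMatchingF hk hlk hEV hEk
      (Nat.succ_pos m) hmV hlV hdeg hfound
    have hcard : #(V.erase w) = #V - 1 := card_erase_of_mem hw
    obtain ⟨M, hME, hM, hMs⟩ := ih (V := V.erase w) (E := E.filter (w ∉ ·))
      (fun e he => subset_erase.2 ⟨hEV e (mem_filter.1 he).1, (mem_filter.1 he).2⟩)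
      (fun e he => hEk e (mem_filter.1 he).1)
      (by rw [hcard]; exact Nat.le_sub_one_of_lt (by nlinarith [pow_pos (by omega : 0 < k) 4]))
      (by omega)
      (lt_degF_filter_notMem_of_lt_degF hlk hEV hEk hw (by omega) hdeg)
    exact hfound (exists_isMatchingF_card_succ_of_lt_degF hEV hEk hw hwdeg hME hM hMs)

end Hypergraph

theorem stmt0_general (k l n m : ℕ) (hk : 3 ≤ k) (hlk : l ≤ k - 1)
    (hm : 0 < m) (hmn : m ≤ n / (2 * k ^ 4))
    (E : Finset (Finset (Fin n))) (hunif : ∀ e ∈ E, e.card = k)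
    (hdeg : ∀ T : Finset (Fin n), T.card = l →
      Nat.choose (n - l) (k - l) - Nat.choose (n - l - m) (k - l) < degF E T) :
    ∃ M ⊆ E, IsMatchingF M ∧ M.card = m + 1 := by
  have hmn' : 2 * k ^ 4 * m ≤ n := by
    rw [mul_comm]
    exact (Nat.le_div_iff_mul_le (by positivity)).1 hmn
  have hkn : k ≤ n := calc
    k ≤ k ^ 4 * 1 := by rw [mul_one]; exact Nat.le_self_pow (by norm_num) k
    _ ≤ 2 * k ^ 4 * m := Nat.mul_le_mul (by omega) hm
    _ ≤ n := hmn'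
  exact exists_isMatchingF_of_lt_degF (k := k) (l := l) (V := univ) (by omega) (by omega) m
    (fun e _ => subset_univ e) hunif (by simpa) (by simp; omega) (by simpa using hdeg)

theorem stmt0 (k l n m : ℕ) (hk : 3 ≤ k) (hl : 1 ≤ l) (hlk : l ≤ k - 1)
    (hm : 0 < m) (hmn : m ≤ n / (2 * k ^ 4))
    (E : Finset (Finset (Fin n))) (hunif : ∀ e ∈ E, e.card = k)
    (hdeg : ∀ T : Finset (Fin n), T.card = l →
      Nat.choose (n - l) (k - l) - Nat.choose (n - l - m) (k - l) < degF E T) :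
    ∃ M ⊆ E, IsMatchingF M ∧ M.card = m + 1 :=
  stmt0_general k l n m hk hlk hm hmn E hunif hdeg
end

section
/- Let $G$ be a stable graph on $[n]$ and let $W \subseteq [n]$ be a set attaining the Berge minimum, i.e., $\nu(G) = (n - c_o(G-W) + |W|)/2$, chosen with $|W|$ maximal. Then every component of $G - W$ has an odd number of vertices, and at most one component of $G - W$ has more than one vertex. -/
open Finset

noncomputable def nuG {V : Type*} (G : SimpleGraph V) : ℕ :=
  sSup {r | ∃ M : G.Subgraph, M.IsMatching ∧ M.edgeSet.ncard = r}

/-- The number of odd connected components of `G - W`. -/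
noncomputable def oddComp {V : Type*} (G : SimpleGraph V) (W : Finset V) : ℕ :=
  Nat.card {c : (G.induce ((↑W : Set V)ᶜ)).ConnectedComponent // Odd (Nat.card c.supp)}

/-- A graph on `[n]` is stable if `N(i) \ {j} ⊆ N(j) \ {i}` whenever `j < i`. -/
def StableG {n : ℕ} (G : SimpleGraph (Fin n)) : Prop :=
  ∀ i j : Fin n, j < i → ∀ x : Fin n, G.Adj i x → x ≠ j → G.Adj j x

/-! If a component `c` of `G - W` were even, moving a vertex `v` of `c` into `W` keeps every
odd component and leaves `c - v` of odd size, so `c - v` contains a new odd component. By the easy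
half of the Berge formula the enlarged set still attains the minimum, against the maximality of
`|W|`. The second claim holds for every `W` and only uses stability: if `i` has a neighbour `x` in
`G - W`, every vertex `j < i` of `G - W` is `x` or adjacent to `x`, so of two non-isolated vertices
the smaller one lies in the component of the larger one. -/

namespace SimpleGraph

variable {V : Type*} {G : SimpleGraph V}

theorem Subgraph.IsMatching.card_verts [Finite V] {M : G.Subgraph} (hM : M.IsMatching) :
    Nat.card M.verts = 2 * Nat.card M.edgeSet := by
  have := Fintype.ofFinite M.edgeSet
  have hfiber : ∀ e : M.edgeSet, Nat.card (hM.toEdge ⁻¹' {e}) = 2 := by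
    rintro ⟨e, he⟩
    induction e using Sym2.ind with
    | h u v =>
      rw [hM.toEdge_preimage_singleton he, Nat.card_coe_set_eq, Set.ncard_pair]
      exact fun huv => (M.adj_sub he).ne (congrArg Subtype.val huv)
  rw [← Nat.card_congr (Equiv.sigmaFiberEquiv hM.toEdge), Nat.card_sigma]
  exact (Finset.sum_congr rfl fun e _ => hfiber e).trans (by simp [mul_comm])

theorem ConnectedComponent.exists_adj_of_one_lt_card_supp {c : G.ConnectedComponent}
    (hc : 1 < Nat.card c.supp) : ∃ x ∈ c.supp, ∃ y, G.Adj x y := by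
  have : Finite c.supp := Nat.finite_of_card_ne_zero (by omega)
  obtain ⟨x, y, hx, hy, hxy⟩ :=
    (Set.one_lt_ncard_iff (Set.toFinite _)).mp (Nat.card_coe_set_eq c.supp ▸ hc)
  obtain ⟨w⟩ := c.reachable_of_mem_supp hx hy
  exact ⟨x, hx, _, w.adj_snd (w.not_nil_of_ne hxy)⟩

theorem ConnectedComponent.exists_odd_card_supp_map_eq [Finite V] {V' : Type*}
    {G' : SimpleGraph V'} (φ : G →g G') (d : G'.ConnectedComponent)
    (hd : Odd (Nat.card (φ ⁻¹' d.supp))) :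
    ∃ c : G.ConnectedComponent, Odd (Nat.card c.supp) ∧ c.map φ = d := by
  classical
  have := Fintype.ofFinite V
  by_contra! h
  have hfiber : ∀ c ∈ univ.filter (·.map φ = d),
      #{x ∈ univ.filter (φ · ∈ d.supp) | G.connectedComponentMk x = c} = Nat.card c.supp := by
    intro c hc
    rw [Nat.card_eq_fintype_card, Fintype.card_subtype]
    congr 1
    ext x
    simp only [mem_filter, mem_univ, true_and, ConnectedComponent.mem_supp_iff,
      and_iff_right_iff_imp]
    rintro rfl
    simpa using (mem_filter.mp hc).2
  have hsum := card_eq_sum_card_fiberwise (f := G.connectedComponentMk)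
    (s := univ.filter (φ · ∈ d.supp)) (t := univ.filter (·.map φ = d))
    (fun x hx => by simpa using hx)
  rw [sum_congr rfl hfiber, ← Fintype.card_subtype, ← Nat.card_eq_fintype_card] at hsum
  refine Nat.not_even_iff_odd.mpr hd (hsum ▸ even_sum _ fun c hc => ?_)
  exact Nat.not_odd_iff_even.mp fun hodd => h c hodd (mem_filter.mp hc).2

theorem Subgraph.IsMatching.exists_mem_supp_not_mem_verts_or_adj [Finite V] {M : G.Subgraph}
    (hM : M.IsMatching) {U : Set V} (c : (G.induce Uᶜ).ConnectedComponent)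
    (hc : Odd (Nat.card c.supp)) :
    ∃ x ∈ c.supp, (x : V) ∉ M.verts ∨ ∃ w ∈ U, M.Adj x w := by
  by_contra! h
  -- otherwise `M` restricted to `c` would be a perfect matching of the odd set `c`
  have hmatch : (M.induce (Subtype.val '' c.supp)).IsMatching := by
    rintro _ ⟨x, hx, rfl⟩
    obtain ⟨w, hw, huniq⟩ := hM (h x hx).1
    have hwU : w ∈ Uᶜ := fun hwU => (h x hx).2 w hwU hw
    have hwc : ⟨w, hwU⟩ ∈ c.supp := c.mem_supp_of_adj_mem_supp hx (M.adj_sub hw)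
    exact ⟨w, ⟨⟨x, hx, rfl⟩, ⟨_, hwc, rfl⟩, hw⟩, fun y hy => huniq y hy.2.2⟩
  classical
  have := Fintype.ofFinite c.supp
  have := Fintype.ofFinite (M.induce (Subtype.val '' c.supp)).verts
  refine Nat.not_even_iff_odd.mpr hc ?_
  simpa [Finset.card_image_of_injective _ Subtype.val_injective, Nat.card_eq_fintype_card]
    using hmatch.even_card

end SimpleGraph

open SimpleGraph

theorem card_inclusion_preimage_compl_insert {V : Type*} [DecidableEq V] {W : Finset V}
    (v : ↥(↑W : Set V)ᶜ) (S : Set ↥(↑W : Set V)ᶜ) (h : (↑(insert v.1 W) : Set V)ᶜ ⊆ (↑W : Set V)ᶜ) :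
    Nat.card (Set.inclusion h ⁻¹' S) = Nat.card ↥(S \ {v}) := by
  rw [Nat.card_coe_set_eq, Nat.card_coe_set_eq, ← Set.preimage_inter_range,
    Set.ncard_preimage_of_injective_subset_range (Set.inclusion_injective h)
      Set.inter_subset_right, Set.range_inclusion]
  congr 1
  ext x
  simp only [Set.mem_inter_iff, Set.mem_ofPred_eq, Finset.coe_insert, Set.mem_compl_iff,
    Set.mem_insert_iff, Set.mem_sdiff, Set.mem_singleton_iff, Subtype.ext_iff, not_or]
  exact and_congr_right fun _ => and_iff_left x.2

section OddComponents

variable {V : Type*} [Finite V]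

theorem oddComp_le_card (G : SimpleGraph V) (U : Finset V) : oddComp G U ≤ Nat.card V :=
  calc oddComp G U ≤ Nat.card (G.induce (↑U : Set V)ᶜ).ConnectedComponent :=
        Finite.card_subtype_le _
    _ ≤ Nat.card ↥(↑U : Set V)ᶜ :=
        Nat.card_le_card_of_surjective _ fun c => c.exists_rep
    _ ≤ Nat.card V := Finite.card_subtype_le _

theorem oddComp_add_two_mul_card_edgeSet_le {G : SimpleGraph V} (U : Finset V) {M : G.Subgraph}
    (hM : M.IsMatching) : oddComp G U + 2 * Nat.card M.edgeSet ≤ Nat.card V + U.card := by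
  -- each odd component owns an unmatched vertex or a vertex matched into `U`
  let owns (c : (G.induce (↑U : Set V)ᶜ).ConnectedComponent) :
      ↥M.vertsᶜ ⊕ ↥(↑U : Set V) → Prop :=
    Sum.elim (fun z => ∃ x ∈ c.supp, (x : V) = z) (fun w => ∃ x ∈ c.supp, M.Adj x w)
  have hexists : ∀ c : {c : (G.induce (↑U : Set V)ᶜ).ConnectedComponent //
      Odd (Nat.card c.supp)}, ∃ t, owns c t := by
    rintro ⟨c, hc⟩
    obtain ⟨x, hx, hxM | ⟨w, hw, hxw⟩⟩ := hM.exists_mem_supp_not_mem_verts_or_adj c hc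
    · exact ⟨.inl ⟨x, hxM⟩, x, hx, rfl⟩
    · exact ⟨.inr ⟨w, hw⟩, x, hx, hxw⟩
  have hunique : ∀ c c' t, owns c t → owns c' t → c = c' := by
    rintro c c' (z | w) ⟨x, hx, hxt⟩ ⟨x', hx', hx't⟩
    · exact ConnectedComponent.eq_of_common_vertex hx (Subtype.ext (hxt.trans hx't.symm) ▸ hx')
    · exact ConnectedComponent.eq_of_common_vertex hx
        (Subtype.ext (hM.eq_of_adj_right hxt hx't) ▸ hx')
  choose f hf using hexists
  have hinj : Function.Injective f := fun c c' hcc' =>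
    Subtype.ext (hunique _ _ _ (hf c) (hcc' ▸ hf c'))
  have hcompl := Set.ncard_add_ncard_compl M.verts
  have := Nat.card_le_card_of_injective f hinj
  rw [Nat.card_sum, Nat.card_coe_set_eq, Nat.card_coe_set_eq, Set.ncard_coe_finset] at this
  rw [← hM.card_verts, Nat.card_coe_set_eq]
  unfold oddComp
  omega

theorem nuG_le (G : SimpleGraph V) (U : Finset V) :
    nuG G ≤ (Nat.card V - oddComp G U + U.card) / 2 := by
  refine csSup_le ⟨0, ⊥, by simp [Subgraph.IsMatching], by simp⟩ ?_
  rintro _ ⟨M, hM, rfl⟩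
  have := oddComp_add_two_mul_card_edgeSet_le U hM
  rw [Nat.card_coe_set_eq] at this
  omega

theorem oddComp_lt_oddComp_insert [DecidableEq V] {G : SimpleGraph V} {W : Finset V}
    {c₀ : (G.induce (↑W : Set V)ᶜ).ConnectedComponent} (hc₀ : Even (Nat.card c₀.supp))
    {v : ↥(↑W : Set V)ᶜ} (hv : v ∈ c₀.supp) : oddComp G W < oddComp G (insert v.1 W) := by
  have hsub : (↑(insert v.1 W) : Set V)ᶜ ⊆ (↑W : Set V)ᶜ :=
    Set.compl_subset_compl.mpr (by simp [Set.subset_insert])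
  let ι := (G.induceHomOfLE hsub).toHom
  -- each odd component of `G - W`, and `c₀ - v`, contains an odd component of `G - insert v W`
  have hodd : ∀ d ∈ insert c₀ {d | Odd (Nat.card d.supp)}, Odd (Nat.card (ι ⁻¹' d.supp)) := by
    rintro d (rfl | hd) <;> change Odd (Nat.card (Set.inclusion hsub ⁻¹' _)) <;>
      rw [card_inclusion_preimage_compl_insert v _ hsub, Nat.card_coe_set_eq]
    · rw [Set.ncard_sdiff_singleton_of_mem hv, ← Nat.card_coe_set_eq]
      exact Nat.Even.sub_odd (Nat.card_pos_iff.mpr ⟨⟨⟨v, hv⟩⟩, inferInstance⟩) hc₀ odd_one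
    · have hvd : v ∉ d.supp := fun hvd =>
        Nat.not_even_iff_odd.mpr hd (ConnectedComponent.eq_of_common_vertex hv hvd ▸ hc₀)
      rwa [Set.sdiff_singleton_eq_self hvd, ← Nat.card_coe_set_eq]
  have hlift : ∀ d : ↥(insert c₀ {d | Odd (Nat.card d.supp)}), ∃ e : {e : (G.induce
      (↑(insert v.1 W) : Set V)ᶜ).ConnectedComponent // Odd (Nat.card e.supp)}, e.1.map ι = d := by
    rintro ⟨d, hd⟩
    obtain ⟨e, he, hed⟩ := ConnectedComponent.exists_odd_card_supp_map_eq ι d (hodd d hd)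
    exact ⟨⟨e, he⟩, hed⟩
  choose f hf using hlift
  have hinj : Function.Injective f := fun d d' h => Subtype.ext ((hf d).symm.trans (h ▸ hf d'))
  have hc₀_notMem : c₀ ∉ {d | Odd (Nat.card d.supp)} := Nat.not_odd_iff_even.mpr hc₀
  calc oddComp G W < Nat.card ↥(insert c₀ {d | Odd (Nat.card d.supp)}) := by
        rw [Nat.card_coe_set_eq, Set.ncard_insert_of_notMem hc₀_notMem, ← Nat.card_coe_set_eq]
        exact lt_add_one _
    _ ≤ oddComp G (insert v.1 W) := Nat.card_le_card_of_injective f hinj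

end OddComponents

theorem StableG.mem_supp_of_le {n : ℕ} {G : SimpleGraph (Fin n)} (hG : StableG G)
    {s : Set (Fin n)} {c : (G.induce s).ConnectedComponent} {i x j : s} (hi : i ∈ c.supp)
    (hix : (G.induce s).Adj i x) (hji : j ≤ i) : j ∈ c.supp := by
  obtain rfl | hlt := hji.eq_or_lt
  · exact hi
  have hx : x ∈ c.supp := c.mem_supp_of_adj_mem_supp hi hix
  by_cases hxj : x = j
  · exact hxj ▸ hx
  · exact (c.mem_supp_congr_adj (hG i j hlt x hix (Subtype.coe_ne_coe.mpr hxj))).mpr hx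

theorem StableG.eq_of_one_lt_card_supp {n : ℕ} {G : SimpleGraph (Fin n)} (hG : StableG G)
    {s : Set (Fin n)} {c d : (G.induce s).ConnectedComponent} (hc : 1 < Nat.card c.supp)
    (hd : 1 < Nat.card d.supp) : c = d := by
  obtain ⟨i, hi, x, hix⟩ := c.exists_adj_of_one_lt_card_supp hc
  obtain ⟨j, hj, y, hjy⟩ := d.exists_adj_of_one_lt_card_supp hd
  rcases le_total j i with hji | hij
  · exact ConnectedComponent.eq_of_common_vertex (hG.mem_supp_of_le hi hix hji) hj
  · exact ConnectedComponent.eq_of_common_vertex hi (hG.mem_supp_of_le hj hjy hij)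

theorem stmt6 (n : ℕ) (G : SimpleGraph (Fin n)) (hstable : StableG G)
    (W : Finset (Fin n))
    (hW : nuG G = (n - oddComp G W + W.card) / 2)
    (hmax : ∀ W' : Finset (Fin n),
      nuG G = (n - oddComp G W' + W'.card) / 2 → W'.card ≤ W.card) :
    (∀ c : (G.induce ((↑W : Set (Fin n))ᶜ)).ConnectedComponent, Odd (Nat.card c.supp)) ∧
    (∀ c d : (G.induce ((↑W : Set (Fin n))ᶜ)).ConnectedComponent,
      1 < Nat.card c.supp → 1 < Nat.card d.supp → c = d) := by
  refine ⟨fun c => ?_, fun _ _ => hstable.eq_of_one_lt_card_supp⟩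
  by_contra hc
  obtain ⟨v, hv⟩ := c.nonempty_supp
  set W' := insert v.1 W
  have hlt : oddComp G W < oddComp G W' :=
    oddComp_lt_oddComp_insert (Nat.not_odd_iff_even.mp hc) hv
  have hcard : W'.card = W.card + 1 := card_insert_of_notMem v.2
  have hle := nuG_le G W'
  have hbound := oddComp_le_card G W'
  rw [Nat.card_fin] at hle hbound
  -- `W'` is Berge-optimal too, contradicting the maximality of `W`
  have := hmax W' (le_antisymm hle (hW ▸ Nat.div_le_div_right (by omega)))
  omega
end

section
/- Let $k \ge 3$, $l \in [k-1]$, and let $\alpha$ be a positive real with $\alpha < (8^{k-1} k^{5(k-1)} k!)^{-1}$. Let $n \ge 8k^6$ and $n/(2k^5) < m \le n/k$ be integers. Suppose $H$ is a $k$-graph on $n$ vertices with vertex partition $U, W$, $|W| = m$, $|U| = n - m$, such that every vertex $v$ of $H$ satisfies $|N_{H_k^{k-l}(U,W)}(v) \setminus N_H(v)| \le \alpha n^{k-1}$. Then $H$ has a matching of size $m$. -/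
/-!
Write `k = K + 2`. Each `w ∈ W` is covered by an edge `{w, u} ∪ S` with `u ∈ U` and `S` a
`K`-subset of `U`; such edges meet `W` once, so they lie in `H_k^{k-l}(U,W)`, and goodness says
that few of them are missing from `H`. First the cores `S = g w` are chosen one by one, pairwise
disjoint, each leaving at most `m / 10` vertices of `U` unable to complete it. The method of
conditional expectations, run on the potential `∑ u, exp (load u + …)`, also keeps every
`u ∈ U` unable to complete fewer than `9m/10` of the chosen cores. Hall's theorem then gives
distinct completing vertices in the unused part of `U`, which has at least `m` vertices.
-/

open Finset Real Function
open scoped Nat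

/-- `H_k^{k-l}(U,W)` (with `U` the complement of `W`): all `k`-sets meeting `W`
in at least `1` and at most `k - l` vertices. -/
def Hkkl (n k l : ℕ) (W : Finset (Fin n)) : Finset (Finset (Fin n)) :=
  ((univ : Finset (Fin n)).powersetCard k).filter
    (fun e => 1 ≤ (e ∩ W).card ∧ (e ∩ W).card ≤ k - l)

/-- The link of a vertex `v` in a `k`-graph: the `(k-1)`-sets `T` with `{v} ∪ T` an edge. -/
def linkF {n : ℕ} (E : Finset (Finset (Fin n))) (k : ℕ) (v : Fin n) :
    Finset (Finset (Fin n)) :=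
  ((univ : Finset (Fin n)).powersetCard (k - 1)).filter
    (fun T => v ∉ T ∧ insert v T ∈ E)

namespace HkMatching

theorem sum_exp_indicator_le {ι : Type*} {C : Finset ι} (hC : C.Nonempty) (p : ι → Prop)
    [DecidablePred p] :
    ∑ x ∈ C, rexp (if p x then 1 else 0) ≤ #C * rexp ((rexp 1 - 1) * #(C.filter p) / #C) := by
  have hC0 : (0 : ℝ) < #C := by exact_mod_cast hC.card_pos
  have hsum : ∑ x ∈ C, rexp (if p x then 1 else 0) =
      #C * (1 + (rexp 1 - 1) * #(C.filter p) / #C) := by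
    have := card_filter_add_card_filter_not (s := C) p
    rw [mul_add, mul_div_cancel₀ _ hC0.ne', ← this]
    simp only [apply_ite rexp, exp_zero, sum_ite, sum_const, nsmul_eq_mul]
    push_cast
    ring
  rw [hsum]
  gcongr
  linarith [add_one_le_exp ((rexp 1 - 1) * #(C.filter p) / #C)]

theorem isMatchingF_image {ι α : Type*} [Fintype ι] [DecidableEq α] {e : ι → Finset α}
    (he : Pairwise (Disjoint on e)) : IsMatchingF (univ.image e) := by
  simp only [IsMatchingF, mem_image, mem_univ, true_and]
  rintro _ ⟨i, rfl⟩ _ ⟨j, rfl⟩ hij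
  exact he fun h => hij (h ▸ rfl)

theorem card_image_of_pairwise_disjoint {ι α : Type*} [Fintype ι] [DecidableEq α]
    {e : ι → Finset α} (hne : ∀ i, (e i).Nonempty) (he : Pairwise (Disjoint on e)) :
    #(univ.image e) = Fintype.card ι := by
  refine card_image_of_injective _ fun i j hij => ?_
  by_contra h
  have := he h
  rw [onFun, hij, disjoint_self] at this
  exact (hne j).ne_empty this

theorem le_card_sdiff_biUnion {ι α : Type*} [DecidableEq α] (U : Finset α) {s : Finset ι}
    {g : ι → Finset α} {K : ℕ} (hg : ∀ i ∈ s, #(g i) = K) :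
    #U ≤ #(U \ s.biUnion g) + K * #s := by
  have h1 : #(s.biUnion g) ≤ K * #s := by
    calc #(s.biUnion g) ≤ ∑ i ∈ s, #(g i) := card_biUnion_le
      _ = K * #s := by rw [sum_congr rfl hg, sum_const, smul_eq_mul, mul_comm]
  have h2 : #U - #(s.biUnion g) ≤ #(U \ s.biUnion g) := le_card_sdiff _ _
  omega

theorem exists_injective_of_card_le {ι α : Type*} [Fintype ι] [DecidableEq α] {X : Finset α}
    {d : ℕ} (N : ι → Finset α) (hX : Fintype.card ι ≤ #X) (hleft : ∀ i, #X ≤ #(N i) + d)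
    (hright : ∀ u ∈ X, #(univ.filter fun i => u ∉ N i) + d < Fintype.card ι) :
    ∃ f : ι → α, Injective f ∧ ∀ i, f i ∈ N i := by
  refine (all_card_le_biUnion_card_iff_exists_injective N).1 fun s => ?_
  rcases s.eq_empty_or_nonempty with rfl | ⟨i₀, hi₀⟩
  · simp
  by_cases hcover : X ⊆ s.biUnion N
  · exact (card_le_univ s).trans (hX.trans (card_le_card hcover))
  obtain ⟨u, huX, hu⟩ := not_subset.1 hcover
  have hs : #s ≤ #(univ.filter fun i => u ∉ N i) :=
    card_le_card fun i hi => mem_filter.2 ⟨mem_univ i, fun h => hu (mem_biUnion.2 ⟨i, hi, h⟩)⟩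
  have := hright u huX
  have := hleft i₀
  have := card_le_card (subset_biUnion_of_mem N hi₀)
  omega

section Cores

/- A vertex `w` is covered by the edge `insert u (insert w S)`: its *core* `S ⊆ U`, of size `K`,
is chosen first, its *last* vertex `u ∈ U` at the end. -/
variable {V : Type*} [DecidableEq V] (E : Finset (Finset V)) (U : Finset V)

def blockedLast (w : V) (S : Finset V) : Finset V :=
  (U \ S).filter fun u => insert u (insert w S) ∉ E

def blockedCores (K : ℕ) (w u : V) : Finset (Finset V) :=
  ((U.erase u).powersetCard K).filter fun S => insert u (insert w S) ∉ E

def missingSets (r : ℕ) (w : V) : Finset (Finset V) :=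
  (U.powersetCard r).filter fun T => insert w T ∉ E

def goodCores (K d : ℕ) (w : V) (F : Finset V) : Finset (Finset V) :=
  (F.powersetCard K).filter fun S => #(blockedLast E U w S) ≤ d

def load (g : V → Finset V) (s : Finset V) (u : V) : ℕ :=
  #(s.filter fun w => u ∉ g w ∧ insert u (insert w (g w)) ∉ E)

theorem sum_card_blockedLast_le {F : Finset V} (hF : F ⊆ U) (K : ℕ) (w : V) :
    ∑ S ∈ F.powersetCard K, #(blockedLast E U w S) ≤
      (K + 1) * #(missingSets E U (K + 1) w) := by
  rw [← card_sigma]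
  refine card_le_mul_card_image_of_maps_to (f := fun p => insert p.2 p.1) ?_ _ ?_
  · rintro ⟨S, u⟩ hp
    simp only [mem_sigma, mem_powersetCard, blockedLast, mem_filter, mem_sdiff] at hp
    obtain ⟨⟨hSF, hSK⟩, ⟨huU, huS⟩, hE⟩ := hp
    simp only [missingSets, mem_filter, mem_powersetCard]
    refine ⟨⟨insert_subset huU (hSF.trans hF), by rw [card_insert_of_notMem huS, hSK]⟩, ?_⟩
    rwa [insert_comm]
  · intro T hT
    calc _ ≤ #T := card_le_card_of_injOn Sigma.snd ?_ ?_
      _ = K + 1 := (mem_powersetCard.1 (mem_filter.1 hT).1).2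
    · rintro ⟨S, u⟩ hp
      simp only [coe_filter, Set.mem_ofPred_eq] at hp
      exact hp.2 ▸ mem_insert_self u S
    · rintro ⟨S, u⟩ hp ⟨S', u'⟩ hp' (rfl : u = u')
      simp only [coe_filter, Set.mem_ofPred_eq, mem_sigma, blockedLast, mem_filter,
        mem_sdiff] at hp hp'
      have : S = S' := by
        rw [← erase_insert hp.1.2.1.2, ← erase_insert hp'.1.2.1.2, hp.2, hp'.2]
      rw [this]

theorem choose_le_two_mul_card_goodCores {F : Finset V} (hF : F ⊆ U) {K d : ℕ} {w : V}
    (h : 2 * (K + 1) * #(missingSets E U (K + 1) w) ≤ (d + 1) * (#F).choose K) :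
    (#F).choose K ≤ 2 * #(goodCores E U K d w F) := by
  set bad := (F.powersetCard K).filter fun S => ¬#(blockedLast E U w S) ≤ d
  have hbad : (d + 1) * #bad ≤ (K + 1) * #(missingSets E U (K + 1) w) :=
    calc (d + 1) * #bad = ∑ _S ∈ bad, (d + 1) := by rw [sum_const, smul_eq_mul, mul_comm]
      _ ≤ ∑ S ∈ bad, #(blockedLast E U w S) := sum_le_sum fun S hS => by
          have := (mem_filter.1 hS).2
          omega
      _ ≤ ∑ S ∈ F.powersetCard K, #(blockedLast E U w S) :=
          sum_le_sum_of_subset (filter_subset _ _)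
      _ ≤ _ := sum_card_blockedLast_le E U hF K w
  have h2bad : 2 * #bad ≤ (#F).choose K :=
    Nat.le_of_mul_le_mul_left (by nlinarith) (Nat.succ_pos d)
  have hsplit : #(goodCores E U K d w F) + #bad = (#F).choose K := by
    rw [← card_powersetCard]
    exact card_filter_add_card_filter_not _
  omega

theorem choose_div_two_le_card_goodCores {K m : ℕ} {β : ℝ} (hroom : (K + 1) * m ≤ #U)
    (hkey : 36 * (K + 1) * β < m * m.choose K) {w : V}
    (hmissing : (#(missingSets E U (K + 1) w) : ℝ) ≤ β) {F : Finset V} (hFU : F ⊆ U)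
    (hF : #U ≤ #F + K * (m - 1)) :
    (m.choose K : ℝ) / 2 ≤ #(goodCores E U K (m / 10) w F) := by
  have hmF : m ≤ #F := by
    rw [Nat.mul_sub_one] at hF
    rw [add_mul, one_mul] at hroom
    omega
  have hd : (m : ℝ) < 10 * (m / 10 + 1 : ℕ) := by norm_cast; omega
  have hCF : (m.choose K : ℝ) ≤ (#F).choose K := by exact_mod_cast Nat.choose_le_choose K hmF
  have hgood := choose_le_two_mul_card_goodCores E U hFU (d := m / 10) (w := w) (by
    have : (2 * (K + 1) * #(missingSets E U (K + 1) w) : ℝ) ≤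
        (m / 10 + 1 : ℕ) * (#F).choose K := by
      nlinarith
    exact_mod_cast this)
  have : ((#F).choose K : ℝ) ≤ 2 * #(goodCores E U K (m / 10) w F) := by exact_mod_cast hgood
  linarith

theorem load_update_insert {g : V → Finset V} {s : Finset V} {w : V} (hw : w ∉ s)
    (S : Finset V) (u : V) :
    load E (update g w S) (insert w s) u =
      load E g s u + if u ∉ S ∧ insert u (insert w S) ∉ E then 1 else 0 := by
  have hs : (s.filter fun v => u ∉ update g w S v ∧
        insert u (insert v (update g w S v)) ∉ E) =
      s.filter fun v => u ∉ g v ∧ insert u (insert v (g v)) ∉ E :=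
    filter_congr fun v hv => by rw [update_of_ne (ne_of_mem_of_not_mem hv hw)]
  rw [load, load, filter_insert, update_self, hs]
  split_ifs
  · exact card_insert_of_notMem fun h => hw (mem_filter.1 h).1
  · rfl

/-- Pessimistic estimator for the cores of `W \ s` still to be chosen: choosing the core of `w`
uniformly among at least `γ` candidates multiplies `rexp (load u)` in expectation by at most
`rexp ((rexp 1 - 1) / γ * #(blockedCores E U K w u))`. -/
noncomputable def potential (K : ℕ) (W : Finset V) (γ : ℝ) (g : V → Finset V)
    (s : Finset V) : ℝ :=
  ∑ u ∈ U, rexp (load E g s u + (rexp 1 - 1) / γ * ∑ w ∈ W \ s, #(blockedCores E U K w u))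

theorem exists_potential_update_le {K : ℕ} {W s : Finset V} {γ : ℝ} (hγ : 0 < γ)
    (g : V → Finset V) {w : V} (hwW : w ∈ W) (hws : w ∉ s) {C : Finset (Finset V)}
    (hCU : ∀ S ∈ C, S ⊆ U) (hCK : ∀ S ∈ C, #S = K) (hγC : γ ≤ #C) :
    ∃ S ∈ C, potential E U K W γ (update g w S) (insert w s) ≤
      potential E U K W γ g s := by
  have hC : C.Nonempty := card_pos.1 (by exact_mod_cast hγ.trans_le hγC)
  refine exists_le_of_sum_le hC ?_
  unfold potential
  rw [sum_const, nsmul_eq_mul, sum_comm, mul_sum]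
  refine sum_le_sum fun u hu => ?_
  set R := ∑ v ∈ W \ insert w s, #(blockedCores E U K v u)
  set blocked := C.filter fun S => u ∉ S ∧ insert u (insert w S) ∉ E
  have hW : ∑ v ∈ W \ s, #(blockedCores E U K v u) = #(blockedCores E U K w u) + R := by
    rw [← sdiff_insert_insert_of_mem_of_notMem hwW hws, sum_insert (by simp)]
  have hblocked : #blocked ≤ #(blockedCores E U K w u) := by
    refine card_le_card fun S hS => ?_
    obtain ⟨hSC, huS, hE⟩ := mem_filter.1 hS
    exact mem_filter.2 ⟨mem_powersetCard.2 ⟨fun x hx => mem_erase.2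
      ⟨fun h => huS (h ▸ hx), hCU S hSC hx⟩, hCK S hSC⟩, hE⟩
  have hfrac : (rexp 1 - 1) * #blocked / #C ≤ (rexp 1 - 1) / γ * #(blockedCores E U K w u) := by
    have hc : 0 ≤ rexp 1 - 1 := by linarith [add_one_le_exp 1]
    rw [mul_div_assoc, div_mul_eq_mul_div, mul_div_assoc]
    gcongr
  calc ∑ S ∈ C, rexp (load E (update g w S) (insert w s) u + (rexp 1 - 1) / γ * R)
      = rexp (load E g s u + (rexp 1 - 1) / γ * R) *
          ∑ S ∈ C, rexp (if u ∉ S ∧ insert u (insert w S) ∉ E then 1 else 0) := by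
        rw [mul_sum]
        refine sum_congr rfl fun S _ => ?_
        rw [load_update_insert E hws, ← exp_add]
        congr 1
        push_cast
        ring
    _ ≤ rexp (load E g s u + (rexp 1 - 1) / γ * R) *
          (#C * rexp ((rexp 1 - 1) / γ * #(blockedCores E U K w u))) := by
        gcongr
        exact (sum_exp_indicator_le hC _).trans (by gcongr)
    _ = #C * rexp (load E g s u +
          (rexp 1 - 1) / γ * ∑ v ∈ W \ s, #(blockedCores E U K v u)) := by
        rw [hW, mul_left_comm, ← exp_add]
        push_cast
        ring_nf

theorem exists_cores {K : ℕ} {W : Finset V} (ok : V → Finset V → Prop)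
    [∀ w, DecidablePred (ok w)] {γ : ℝ} (hγ : 0 < γ)
    (hpool : ∀ w ∈ W, ∀ F ⊆ U, #U ≤ #F + K * (#W - 1) →
      γ ≤ #((F.powersetCard K).filter (ok w))) :
    ∃ g : V → Finset V, (∀ w ∈ W, g w ⊆ U ∧ #(g w) = K ∧ ok w (g w)) ∧
      (W : Set V).PairwiseDisjoint g ∧
      ∑ u ∈ U, rexp (load E g W u) ≤
        ∑ u ∈ U, rexp ((rexp 1 - 1) / γ * ∑ w ∈ W, #(blockedCores E U K w u)) := by
  suffices h : ∀ s ⊆ W, ∃ g : V → Finset V,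
      (∀ w ∈ s, g w ⊆ U ∧ #(g w) = K ∧ ok w (g w)) ∧
      (s : Set V).PairwiseDisjoint g ∧ potential E U K W γ g s ≤
        ∑ u ∈ U, rexp ((rexp 1 - 1) / γ * ∑ w ∈ W, #(blockedCores E U K w u)) by
    obtain ⟨g, hg, hdisj, hpot⟩ := h W subset_rfl
    exact ⟨g, hg, hdisj, by simpa [potential] using hpot⟩
  intro s
  induction s using Finset.induction_on with
  | empty => exact fun _ => ⟨fun _ => ∅, by simp, by simp, by simp [potential, load]⟩
  | insert w s hws ih =>
    intro hsW
    obtain ⟨g, hg, hdisj, hpot⟩ := ih ((subset_insert w s).trans hsW)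
    set F := U \ s.biUnion g
    have hF : #U ≤ #F + K * (#W - 1) := by
      have hs : #s + 1 ≤ #W := by
        simpa [card_insert_of_notMem hws] using card_le_card hsW
      have : #U ≤ #F + K * #s := le_card_sdiff_biUnion U fun v hv => (hg v hv).2.1
      have := Nat.mul_le_mul_left K (show #s ≤ #W - 1 by omega)
      omega
    have hwW := hsW (mem_insert_self w s)
    obtain ⟨S, hS, hSpot⟩ := exists_potential_update_le E U hγ g hwW hws
      (C := (F.powersetCard K).filter (ok w))
      (fun S hS => (mem_powersetCard.1 (mem_filter.1 hS).1).1.trans sdiff_subset)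
      (fun S hS => (mem_powersetCard.1 (mem_filter.1 hS).1).2)
      (hpool w hwW F sdiff_subset hF)
    obtain ⟨⟨hSF, hSK⟩, hSok⟩ := mem_filter.1 hS |>.imp_left mem_powersetCard.1
    have hSg : ∀ v ∈ s, Disjoint S (g v) := fun v hv =>
      disjoint_left.2 fun x hxS hxg => (mem_sdiff.1 (hSF hxS)).2 (mem_biUnion.2 ⟨v, hv, hxg⟩)
    have hupd : ∀ v ∈ s, update g w S v = g v := fun v hv =>
      update_of_ne (ne_of_mem_of_not_mem hv hws) _ _
    refine ⟨update g w S, ?_, ?_, hSpot.trans hpot⟩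
    · intro v hv
      rcases mem_insert.1 hv with rfl | hv
      · simpa using ⟨hSF.trans sdiff_subset, hSK, hSok⟩
      · rw [hupd v hv]
        exact hg v hv
    · rw [coe_insert]
      refine Set.PairwiseDisjoint.insert (fun v hv v' hv' hne => ?_) fun v hv _ => ?_
      · simpa [onFun, hupd v hv, hupd v' hv'] using hdisj hv hv' hne
      · simpa [hupd v hv] using hSg v hv

theorem exists_cores_of_counts {W : Finset V} {K : ℕ} {β : ℝ} (hK : 1 ≤ K) (hKW : K ≤ #W)
    (hroom : (K + 1) * #W ≤ #U) (hU : (#U : ℝ) ≤ rexp (4 / 5 * #W))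
    (hkey : 36 * (K + 1) * β < #W * (#W).choose K)
    (hmissing : ∀ w ∈ W, (#(missingSets E U (K + 1) w) : ℝ) ≤ β)
    (hcores : ∀ u ∈ U, (∑ w ∈ W, #(blockedCores E U K w u) : ℝ) ≤ β) :
    ∃ g : V → Finset V,
      (∀ w ∈ W, g w ⊆ U ∧ #(g w) = K ∧ #(blockedLast E U w (g w)) ≤ #W / 10) ∧
      (W : Set V).PairwiseDisjoint g ∧ ∀ u ∈ U, load E g W u + #W / 10 < #W := by
  set m := #W
  set C := m.choose K
  have hC : (0 : ℝ) < C := by exact_mod_cast Nat.choose_pos hKW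
  have hβ : 0 ≤ β := by
    obtain ⟨w, hw⟩ := card_pos.1 (show 0 < m by omega)
    exact (Nat.cast_nonneg _).trans (hmissing w hw)
  have hK1 : (2 : ℝ) ≤ K + 1 := by norm_cast; omega
  obtain ⟨g, hg, hdisj, hpot⟩ := exists_cores E U (fun w S => #(blockedLast E U w S) ≤ m / 10)
    (γ := C / 2) (by positivity) fun w hw F hFU hF =>
      choose_div_two_le_card_goodCores E U hroom hkey (hmissing w hw) hFU hF
  refine ⟨g, hg, hdisj, fun u hu => ?_⟩
  have hA : ∀ v ∈ U,
      (rexp 1 - 1) / (C / 2) * ∑ w ∈ W, (#(blockedCores E U K w v) : ℝ) ≤ m / 18 := by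
    intro v hv
    have he : rexp 1 - 1 ≤ 2 := by linarith [exp_one_lt_d9]
    rw [div_div_eq_mul_div, div_mul_eq_mul_div, div_le_div_iff₀ hC (by norm_num)]
    nlinarith [hcores v hv, add_one_le_exp 1]
  have hload : (load E g W u : ℝ) ≤ 4 / 5 * m + m / 18 := by
    rw [← exp_le_exp]
    calc rexp (load E g W u) ≤ ∑ v ∈ U, rexp (load E g W v) :=
          single_le_sum (f := fun v => rexp (load E g W v)) (fun _ _ => (exp_pos _).le) hu
      _ ≤ ∑ v ∈ U, rexp ((rexp 1 - 1) / (C / 2) * ∑ w ∈ W, #(blockedCores E U K w v)) :=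
          hpot
      _ ≤ ∑ _v ∈ U, rexp (m / 18) :=
          sum_le_sum fun v hv => exp_le_exp.2 (by exact_mod_cast hA v hv)
      _ ≤ rexp (4 / 5 * m) * rexp (m / 18) := by rw [sum_const, nsmul_eq_mul]; gcongr
      _ = rexp (4 / 5 * m + m / 18) := (exp_add _ _).symm
  have hd : ((m / 10 : ℕ) : ℝ) ≤ m / 10 := Nat.cast_div_le
  have hm : (0 : ℝ) < m := by norm_cast; omega
  exact_mod_cast (by linarith : (load E g W u : ℝ) + (m / 10 : ℕ) < m)

theorem exists_injective_completion {W : Finset V} {K d : ℕ} {g : V → Finset V}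
    (hgK : ∀ w ∈ W, #(g w) = K) (hroom : (K + 1) * #W ≤ #U)
    (hlast : ∀ w ∈ W, #(blockedLast E U w (g w)) ≤ d)
    (hload : ∀ u ∈ U, load E g W u + d < #W) :
    ∃ f : W → V, Injective f ∧
      ∀ w, f w ∈ U \ W.biUnion g ∧ insert (f w) (insert ↑w (g w)) ∈ E := by
  set X := U \ W.biUnion g
  set N : W → Finset V := fun w => X.filter fun u => insert u (insert ↑w (g w)) ∈ E
  have hX : Fintype.card W ≤ #X := by
    have : #U ≤ #X + K * #W := le_card_sdiff_biUnion U hgK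
    rw [add_mul, one_mul] at hroom
    rw [Fintype.card_coe]
    omega
  have hleft : ∀ w : W, #X ≤ #(N w) + d := by
    intro w
    have hsub : X \ N w ⊆ blockedLast E U w (g w) := by
      intro u hu
      obtain ⟨huX, huN⟩ := mem_sdiff.1 hu
      obtain ⟨huU, hug⟩ := mem_sdiff.1 huX
      exact mem_filter.2 ⟨mem_sdiff.2 ⟨huU, fun h => hug (mem_biUnion.2 ⟨w, w.2, h⟩)⟩,
        fun hE => huN (mem_filter.2 ⟨huX, hE⟩)⟩
    have := (card_le_card hsub).trans (hlast w w.2)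
    have := le_card_sdiff (N w) X
    omega
  have hright : ∀ u ∈ X, #(univ.filter fun w => u ∉ N w) + d < Fintype.card W := by
    intro u huX
    obtain ⟨huU, hug⟩ := mem_sdiff.1 huX
    have : #(univ.filter fun w => u ∉ N w) ≤ load E g W u := by
      refine card_le_card_of_injOn Subtype.val (fun w hw => ?_) Subtype.val_injective.injOn
      have hwN : u ∉ N w := (mem_filter.1 hw).2
      exact mem_filter.2 ⟨w.2, fun h => hug (mem_biUnion.2 ⟨w, w.2, h⟩),
        fun hE => hwN (mem_filter.2 ⟨huX, hE⟩)⟩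
    rw [Fintype.card_coe]
    exact (Nat.add_le_add_right this d).trans_lt (hload u huU)
  obtain ⟨f, hf, hfN⟩ := exists_injective_of_card_le N hX hleft hright
  exact ⟨f, hf, fun w => mem_filter.1 (hfN w)⟩

theorem exists_matching_of_completion {W : Finset V} (hUW : Disjoint U W) {g : V → Finset V}
    (hgU : ∀ w ∈ W, g w ⊆ U) (hdisj : (W : Set V).PairwiseDisjoint g) {f : W → V}
    (hf : Injective f) (hfX : ∀ w, f w ∈ U \ W.biUnion g)
    (hfE : ∀ w, insert (f w) (insert ↑w (g w)) ∈ E) :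
    ∃ M ⊆ E, IsMatchingF M ∧ #M = #W := by
  set e : W → Finset V := fun w => insert (f w) (insert ↑w (g w))
  have hfW : ∀ w, f w ∉ W := fun w => disjoint_left.1 hUW (mem_sdiff.1 (hfX w)).1
  have hfg : ∀ w, ∀ v : W, f w ∉ g v := fun w v h =>
    (mem_sdiff.1 (hfX w)).2 (mem_biUnion.2 ⟨v, v.2, h⟩)
  have hWg : ∀ w v : W, (w : V) ∉ g v := fun w v h => disjoint_left.1 hUW (hgU v v.2 h) w.2
  have he : Pairwise (Disjoint on e) := by
    intro w v hne
    have hne' : (w : V) ≠ v := Subtype.coe_injective.ne hne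
    rw [onFun, disjoint_left]
    intro x hx hx'
    simp only [e, mem_insert] at hx hx'
    rcases hx with rfl | rfl | hx <;> rcases hx' with h | h | h
    · exact hne (hf h)
    · exact hfW w (h ▸ v.2)
    · exact hfg w v h
    · exact hfW v (h ▸ w.2)
    · exact hne' h
    · exact hWg w v h
    · exact hfg v w (h ▸ hx)
    · exact hWg v w (h ▸ hx)
    · exact disjoint_left.1 (hdisj w.2 v.2 hne') hx h
  refine ⟨univ.image e, fun M hM => ?_, isMatchingF_image he, ?_⟩
  · obtain ⟨w, -, rfl⟩ := mem_image.1 hM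
    exact hfE w
  · rw [card_image_of_pairwise_disjoint (fun w => insert_nonempty _ _) he, Fintype.card_coe]

end Cores

section Link

variable {n : ℕ} {E : Finset (Finset (Fin n))} {W : Finset (Fin n)} {K l : ℕ}

theorem mem_linkF {k : ℕ} {v : Fin n} {T : Finset (Fin n)} :
    T ∈ linkF E k v ↔ #T = k - 1 ∧ v ∉ T ∧ insert v T ∈ E := by
  simp [linkF]

theorem insert_mem_Hkkl (hlK : l ≤ K + 1) {w : Fin n} (hw : w ∈ W)
    {T : Finset (Fin n)} (hT : T ⊆ Wᶜ) (hTK : #T = K + 1) :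
    insert w T ∈ Hkkl n (K + 2) l W := by
  have hwT : w ∉ T := fun h => mem_compl.1 (hT h) hw
  have hTW : insert w T ∩ W = {w} := by
    rw [insert_inter_of_mem hw, disjoint_iff_inter_eq_empty.1
      (disjoint_left.2 fun x hx => mem_compl.1 (hT hx)), insert_empty]
  simp only [Hkkl, mem_filter, mem_powersetCard, hTW, card_singleton]
  exact ⟨⟨subset_univ _, by rw [card_insert_of_notMem hwT, hTK]⟩, le_rfl, by omega⟩

theorem card_missingSets_le (hlK : l ≤ K + 1) {w : Fin n} (hw : w ∈ W) :
    #(missingSets E Wᶜ (K + 1) w) ≤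
      #(linkF (Hkkl n (K + 2) l W) (K + 2) w \ linkF E (K + 2) w) := by
  refine card_le_card fun T hT => ?_
  obtain ⟨hT, hE⟩ := mem_filter.1 hT
  obtain ⟨hTU, hTK⟩ := mem_powersetCard.1 hT
  have hwT : w ∉ T := fun h => mem_compl.1 (hTU h) hw
  exact mem_sdiff.2 ⟨mem_linkF.2 ⟨hTK, hwT, insert_mem_Hkkl hlK hw hTU hTK⟩,
    fun h => hE (mem_linkF.1 h).2.2⟩

theorem sum_card_blockedCores_le (hlK : l ≤ K + 1) {u : Fin n} (hu : u ∉ W) :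
    ∑ w ∈ W, #(blockedCores E Wᶜ K w u) ≤
      #(linkF (Hkkl n (K + 2) l W) (K + 2) u \ linkF E (K + 2) u) := by
  rw [← card_sigma]
  refine card_le_card_of_injOn (fun p => insert p.1 p.2) ?_ ?_
  · rintro ⟨w, S⟩ hp
    simp only [coe_sigma, Set.mem_sigma_iff, mem_coe, blockedCores, mem_filter,
      mem_powersetCard, subset_erase] at hp
    obtain ⟨hw, ⟨⟨hSU, huS⟩, hSK⟩, hE⟩ := hp
    have hwS : w ∉ S := fun h => mem_compl.1 (hSU h) hw
    have huw : u ≠ w := fun h => hu (h ▸ hw)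
    refine mem_sdiff.2 ⟨mem_linkF.2 ⟨by rw [card_insert_of_notMem hwS, hSK]; rfl, ?_, ?_⟩,
      fun h => hE (mem_linkF.1 h).2.2⟩
    · simpa [huw] using huS
    · rw [insert_comm]
      exact insert_mem_Hkkl hlK hw (insert_subset (mem_compl.2 hu) hSU)
        (by rw [card_insert_of_notMem huS, hSK])
  · rintro ⟨w, S⟩ hp ⟨w', S'⟩ hp' (h : insert w S = insert w' S')
    simp only [coe_sigma, Set.mem_sigma_iff, mem_coe, blockedCores, mem_filter,
      mem_powersetCard, subset_erase] at hp hp'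
    have hwS : w ∉ S' := fun h => mem_compl.1 (hp'.2.1.1.1 h) hp.1
    have hw : w = w' := by
      have := h ▸ mem_insert_self w S
      simpa [hwS] using this
    subst hw
    rw [← erase_insert (fun h => mem_compl.1 (hp.2.1.1.1 h) hp.1), h,
      erase_insert hwS]

end Link

theorem four_mul_lt_of_lt_two_mul_pow {k m n : ℕ} (hk : 0 < k) (hn : 8 * k ^ 6 ≤ n)
    (hnm : (n : ℝ) < 2 * k ^ 5 * m) : (4 * k : ℝ) < m := by
  have hk5 : (0 : ℝ) < 2 * k ^ 5 := by positivity
  have : (8 * k ^ 6 : ℝ) ≤ n := by exact_mod_cast hn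
  refine lt_of_mul_lt_mul_left ?_ hk5.le
  nlinarith

theorem le_exp_of_lt_two_mul_pow {k m n : ℕ} (hk : 0 < k) (hn : 8 * k ^ 6 ≤ n)
    (hnm : (n : ℝ) < 2 * k ^ 5 * m) : (n : ℝ) ≤ rexp (4 / 5 * m) := by
  have hmk := four_mul_lt_of_lt_two_mul_pow hk hn hnm
  have hk1 : (1 : ℝ) ≤ k := by exact_mod_cast hk
  have hm5 : (5 : ℝ) ≤ m := by
    have : 4 * k < m := by exact_mod_cast hmk
    exact_mod_cast (by omega : 5 ≤ m)
  have hm : (0 : ℝ) < m := by linarith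
  have hn0 : (0 : ℝ) < n := by
    have : (8 * k ^ 6 : ℝ) ≤ n := by exact_mod_cast hn
    nlinarith [pow_pos (by linarith : (0 : ℝ) < k) 6]
  have hnm6 : (n : ℝ) < m ^ 6 / 2 ^ 9 := by
    calc (n : ℝ) < 2 * k ^ 5 * m := hnm
      _ ≤ 2 * (m / 4) ^ 5 * m := by gcongr; linarith
      _ = m ^ 6 / 2 ^ 9 := by ring
  have hlogm : log m ≤ 3 * log 2 + m / 8 - 1 := by
    have := log_le_sub_one_of_pos (show (0 : ℝ) < m / 8 by positivity)
    rw [log_div hm.ne' (by norm_num), show (8 : ℝ) = 2 ^ 3 by norm_num, log_pow] at this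
    push_cast at this
    linarith
  have hlogn : log n < 6 * log m - 9 * log 2 := by
    have := log_lt_log hn0 hnm6
    rwa [log_div (by positivity) (by norm_num), log_pow, log_pow] at this
  rw [← log_le_iff_le_exp hn0]
  nlinarith [log_two_lt_d9]

theorem pow_sub_le_factorial_mul_choose {K m : ℕ} (hKm : (K : ℝ) ≤ m + 1) :
    ((m : ℝ) + 1 - K) ^ K ≤ K ! * m.choose K := by
  have h := Nat.pow_sub_le_descFactorial m K
  rw [Nat.descFactorial_eq_factorial_mul_choose] at h
  have : ((m + 1 - K : ℕ) : ℝ) = m + 1 - K := by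
    rw [Nat.cast_sub (by exact_mod_cast hKm)]
    push_cast
    ring
  rw [← this]
  exact_mod_cast h

theorem thirtysix_mul_factorial_le {K : ℕ} (hK : 1 ≤ K) :
    36 * ((K : ℝ) + 1) * K ! ≤ 4 * 3 ^ K * (K + 2)! := by
  have h3K : (3 : ℝ) ≤ 3 ^ K := le_self_pow₀ (by norm_num) (by omega)
  have h3 : (3 : ℝ) ≤ K + 2 := by norm_cast; omega
  have h9 : (9 : ℝ) ≤ 3 ^ K * (K + 2) := by nlinarith
  have hP : (0 : ℝ) ≤ (K + 1) * K ! := by positivity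
  have : ((K + 2)! : ℝ) = (K + 2) * (K + 1) * K ! := by
    push_cast [Nat.factorial_succ]
    ring
  rw [this]
  nlinarith [mul_le_mul_of_nonneg_right h9 hP]

theorem mul_pow_mul_factorial_lt {K n : ℕ} {α : ℝ}
    (hα : α < ((8 : ℝ) ^ (K + 1) * ((K + 2 : ℕ) : ℝ) ^ (5 * (K + 1)) * (K + 2)!)⁻¹)
    (hn : 0 < (n : ℝ) / (8 * ((K + 2 : ℕ) : ℝ) ^ 5)) :
    α * n ^ (K + 1) * (K + 2)! < ((n : ℝ) / (8 * ((K + 2 : ℕ) : ℝ) ^ 5)) ^ (K + 1) := by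
  set k : ℝ := ((K + 2 : ℕ) : ℝ)
  set q : ℝ := n / (8 * k ^ 5)
  set X : ℝ := (8 : ℝ) ^ (K + 1) * k ^ (5 * (K + 1)) * (K + 2)!
  have hX : 0 < X := by positivity
  have hαX : α * X < 1 := by
    calc α * X < X⁻¹ * X := mul_lt_mul_of_pos_right hα hX
      _ = 1 := inv_mul_cancel₀ hX.ne'
  have : α * n ^ (K + 1) * (K + 2)! = α * X * q ^ (K + 1) := by
    rw [show (n : ℝ) = 8 * k ^ 5 * q from (mul_div_cancel₀ _ (by positivity)).symm, mul_pow,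
      mul_pow, ← pow_mul, mul_comm 5]
    ring
  rw [this]
  nlinarith [pow_pos hn (K + 1)]

theorem mul_pow_lt_mul_choose {K m n : ℕ} {α : ℝ} (hK : 1 ≤ K)
    (hα : α < ((8 : ℝ) ^ (K + 1) * ((K + 2 : ℕ) : ℝ) ^ (5 * (K + 1)) * (K + 2)!)⁻¹)
    (hn : 8 * (K + 2) ^ 6 ≤ n) (hnm : (n : ℝ) < 2 * ((K + 2 : ℕ) : ℝ) ^ 5 * m) :
    36 * (K + 1) * (α * n ^ (K + 1)) < m * m.choose K := by
  set k : ℝ := ((K + 2 : ℕ) : ℝ)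
  have hkK : k = K + 2 := by push_cast [k]; rfl
  have hk0 : 0 < k := by positivity
  set q : ℝ := n / (8 * k ^ 5)
  have hnq : (n : ℝ) = 8 * k ^ 5 * q := (mul_div_cancel₀ _ (by positivity)).symm
  have hkq : k ≤ q := by
    rw [le_div_iff₀ (by positivity)]
    have : (8 * (K + 2) ^ 6 : ℕ) ≤ (n : ℝ) := by exact_mod_cast hn
    have hk6 : k * (8 * k ^ 5) = 8 * (K + 2) ^ 6 := by rw [hkK]; ring
    push_cast at this
    linarith
  have hqm : 4 * q < m := by
    rw [hnq] at hnm
    nlinarith [pow_pos hk0 5]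
  have hαq := mul_pow_mul_factorial_lt hα (hk0.trans_le hkq)
  have hchoose := pow_sub_le_factorial_mul_choose (show (K : ℝ) ≤ m + 1 by linarith)
  have h3q : 3 * q ≤ m + 1 - K := by linarith
  have hfac := thirtysix_mul_factorial_le hK
  have hpos : (0 : ℝ) < (K + 2)! * K ! := by positivity
  refine lt_of_mul_lt_mul_right ?_ hpos.le
  calc 36 * (K + 1) * (α * n ^ (K + 1)) * ((K + 2)! * K !)
      = 36 * (K + 1) * K ! * (α * n ^ (K + 1) * (K + 2)!) := by ring
    _ < 36 * (K + 1) * K ! * q ^ (K + 1) := by gcongr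
    _ ≤ 4 * 3 ^ K * (K + 2)! * q ^ (K + 1) := by gcongr
    _ = (K + 2)! * (4 * q) * (3 * q) ^ K := by rw [mul_pow, pow_succ]; ring
    _ ≤ (K + 2)! * m * ((m : ℝ) + 1 - K) ^ K := by
        have : 0 ≤ q := hk0.le.trans hkq
        gcongr
    _ ≤ (K + 2)! * m * (K ! * m.choose K) := by gcongr
    _ = m * m.choose K * ((K + 2)! * K !) := by ring

end HkMatching

open HkMatching

theorem stmt13_general (k l n m : ℕ) (α : ℝ) (hk : 3 ≤ k) (hlk : l ≤ k - 1)
    (hα : α < ((8 : ℝ) ^ (k - 1) * (k : ℝ) ^ (5 * (k - 1)) * Nat.factorial k)⁻¹)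
    (hn : 8 * k ^ 6 ≤ n) (hm1 : (n : ℝ) / (2 * (k : ℝ) ^ 5) < (m : ℝ))
    (hm2 : (m : ℝ) ≤ (n : ℝ) / k)
    (E : Finset (Finset (Fin n)))
    (W : Finset (Fin n)) (hW : W.card = m)
    (hgood : ∀ v : Fin n,
      (((linkF (Hkkl n k l W) k v) \ (linkF E k v)).card : ℝ) ≤ α * (n : ℝ) ^ (k - 1)) :
    ∃ M ⊆ E, IsMatchingF M ∧ M.card = m := by
  obtain ⟨K, rfl⟩ : ∃ K, k = K + 2 := ⟨k - 2, by omega⟩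
  have hnm : (n : ℝ) < 2 * ((K + 2 : ℕ) : ℝ) ^ 5 * m := by
    rwa [div_lt_iff₀ (by positivity), mul_comm] at hm1
  have hsize : (K + 2) * m ≤ n := by
    rw [le_div_iff₀ (by positivity), mul_comm] at hm2
    exact_mod_cast hm2
  have hKm : K ≤ m := by
    have := four_mul_lt_of_lt_two_mul_pow (by omega) hn hnm
    push_cast at this
    exact_mod_cast (by linarith : (K : ℝ) ≤ m)
  have hroom : (K + 1) * #W ≤ #Wᶜ := by
    rw [card_compl, Fintype.card_fin, hW]
    rw [add_mul] at hsize ⊢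
    omega
  have hUexp : (#Wᶜ : ℝ) ≤ rexp (4 / 5 * #W) := by
    rw [hW]
    exact (Nat.cast_le.2 ((card_le_univ Wᶜ).trans_eq (Fintype.card_fin n))).trans
      (le_exp_of_lt_two_mul_pow (by omega) hn hnm)
  obtain ⟨g, hg, hdisj, hload⟩ := exists_cores_of_counts E Wᶜ (β := α * n ^ (K + 1))
    (by omega) (hW ▸ hKm) hroom hUexp
    (hW ▸ mul_pow_lt_mul_choose (by omega) hα hn hnm)
    (fun w hw => le_trans (by exact_mod_cast card_missingSets_le hlk hw) (hgood w))
    (fun u hu => le_trans (by exact_mod_cast sum_card_blockedCores_le hlk (mem_compl.1 hu))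
      (hgood u))
  obtain ⟨f, hf, hfXE⟩ := exists_injective_completion E Wᶜ (fun w hw => (hg w hw).2.1)
    hroom (fun w hw => (hg w hw).2.2) hload
  obtain ⟨M, hME, hM, hMcard⟩ := exists_matching_of_completion E Wᶜ disjoint_compl_left
    (fun w hw => (hg w hw).1) hdisj hf (fun w => (hfXE w).1) (fun w => (hfXE w).2)
  exact ⟨M, hME, hM, hMcard.trans hW⟩

theorem stmt13 (k l n m : ℕ) (α : ℝ) (hk : 3 ≤ k) (hl : 1 ≤ l) (hlk : l ≤ k - 1)
    (hα0 : 0 < α)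
    (hα : α < ((8 : ℝ) ^ (k - 1) * (k : ℝ) ^ (5 * (k - 1)) * Nat.factorial k)⁻¹)
    (hn : 8 * k ^ 6 ≤ n) (hm1 : (n : ℝ) / (2 * (k : ℝ) ^ 5) < (m : ℝ))
    (hm2 : (m : ℝ) ≤ (n : ℝ) / k)
    (E : Finset (Finset (Fin n))) (hunif : ∀ e ∈ E, e.card = k)
    (W : Finset (Fin n)) (hW : W.card = m)
    (hgood : ∀ v : Fin n,
      (((linkF (Hkkl n k l W) k v) \ (linkF E k v)).card : ℝ) ≤ α * (n : ℝ) ^ (k - 1)) :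
    ∃ M ⊆ E, IsMatchingF M ∧ M.card = m :=
  stmt13_general k l n m α hk hlk hα hn hm1 hm2 E W hW hgood
end
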